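/- Under the assumptions of the one-step Elo update map E with KL < 1, for all x, y ∈ R^N one has ‖E(x) − E(y)‖ ≤ ‖x − y‖; i.e., the simultaneous Elo update with identical match data is a (weak) contraction in Euclidean norm. -/

import Mathlib

/-!
With `w = eᵢ - eⱼ`, the difference of two updates is `E x - E y = (x - y) - K (b u - b v) w`
where `u, v` are the rating gaps `xⁱ - xʲ`, `yⁱ - yʲ`. Since `⟪x - y, w⟫ = u - v` and `‖w‖² = 2`,
`‖E x - E y‖² = ‖x - y‖² - 2K (b u - b v)(u - v) + 2K² (b u - b v)²`. Monotonicity of `b` makes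
the cross term dissipative, and the Lipschitz bound with `KL ≤ 1` lets it absorb the quadratic term.
-/

open RealInnerProductSpace

lemma sq_sub_le_of_monotone_of_lipschitz {b : ℝ → ℝ} (hb : Monotone b) {K L : ℝ}
    (hb_lip : ∀ u v, |b u - b v| ≤ L * |u - v|) (hK : 0 ≤ K) (hKL : K * L ≤ 1) (u v : ℝ) :
    K * (b u - b v) ^ 2 ≤ (b u - b v) * (u - v) := by
  have hmono : 0 ≤ (b u - b v) * (u - v) :=
    (hb.monovary monotone_id).sub_mul_sub_nonneg v u
  calc K * (b u - b v) ^ 2 = K * |b u - b v| * |b u - b v| := by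
        rw [mul_assoc, abs_mul_abs_self, sq]
    _ ≤ K * |b u - b v| * (L * |u - v|) := by gcongr; exact hb_lip u v
    _ = K * L * |(b u - b v) * (u - v)| := by rw [abs_mul]; ring
    _ ≤ (b u - b v) * (u - v) := by
      rw [abs_of_nonneg hmono]; exact mul_le_of_le_one_left hmono hKL

lemma norm_add_smul_le_of_mul_nonpos {E : Type*} [NormedAddCommGroup E] [InnerProductSpace ℝ E]
    {d w : E} {c : ℝ} (h : c * (2 * ⟪d, w⟫ + c * ‖w‖ ^ 2) ≤ 0) : ‖d + c • w‖ ≤ ‖d‖ := by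
  refine sq_le_sq₀ (norm_nonneg _) (norm_nonneg _) |>.mp ?_
  rw [norm_add_sq_real, inner_smul_right, norm_smul, mul_pow, Real.norm_eq_abs, sq_abs]
  linarith

namespace EuclideanSpace

variable {ι : Type*} [Fintype ι] [DecidableEq ι]

lemma inner_single_sub_single_right (x : EuclideanSpace ℝ ι) (i j : ι) :
    ⟪x, single i 1 - single j 1⟫ = x i - x j := by
  simp [inner_sub_right, inner_single_right]

lemma norm_single_sub_single_sq {i j : ι} (hij : i ≠ j) :
    ‖(single i 1 - single j 1 : EuclideanSpace ℝ ι)‖ ^ 2 = 2 := by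
  rw [← real_inner_self_eq_norm_sq, inner_single_sub_single_right]
  norm_num [hij]

end EuclideanSpace

theorem stmt_3_general (N : ℕ) (i j : Fin N) (hij : i ≠ j)
    (s : ℝ)
    (b : ℝ → ℝ) (hb_mono : StrictMono b)
    (L : ℝ) (hb_lip : ∀ u v, |b u - b v| ≤ L * |u - v|)
    (K : ℝ) (hK : 0 < K) (hKL : K * L < 1)
    (E : EuclideanSpace ℝ (Fin N) → EuclideanSpace ℝ (Fin N))
    (hE : ∀ x, E x = x + (K * (s - b (x i - x j))) •
      (EuclideanSpace.single i (1 : ℝ) - EuclideanSpace.single j (1 : ℝ))) :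
    ∀ x y : EuclideanSpace ℝ (Fin N), ‖E x - E y‖ ≤ ‖x - y‖ := by
  intro x y
  set w : EuclideanSpace ℝ (Fin N) := EuclideanSpace.single i 1 - EuclideanSpace.single j 1
  set u := x i - x j
  set v := y i - y j
  have hdiff : E x - E y = (x - y) + (-K * (b u - b v)) • w := by
    rw [hE, hE]; module
  have hinner : ⟪x - y, w⟫ = u - v := by
    rw [EuclideanSpace.inner_single_sub_single_right, PiLp.sub_apply, PiLp.sub_apply]; ring
  have hdissip := sq_sub_le_of_monotone_of_lipschitz hb_mono.monotone hb_lip hK.le hKL.le u v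
  rw [hdiff]
  apply norm_add_smul_le_of_mul_nonpos
  rw [hinner, EuclideanSpace.norm_single_sub_single_sq hij]
  nlinarith [mul_le_mul_of_nonneg_left hdissip hK.le]

theorem stmt_3 (N : ℕ) (hN : 2 ≤ N) (i j : Fin N) (hij : i ≠ j)
    (s : ℝ) (hs : s ∈ Set.Icc (-1 : ℝ) 1)
    (b : ℝ → ℝ) (hb_mono : StrictMono b)
    (hb_range : ∀ u, b u ∈ Set.Ioo (-1 : ℝ) 1)
    (L : ℝ) (hL : 0 ≤ L) (hb_lip : ∀ u v, |b u - b v| ≤ L * |u - v|)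
    (K : ℝ) (hK : 0 < K) (hKL : K * L < 1)
    (E : EuclideanSpace ℝ (Fin N) → EuclideanSpace ℝ (Fin N))
    (hE : ∀ x, E x = x + (K * (s - b (x i - x j))) •
      (EuclideanSpace.single i (1 : ℝ) - EuclideanSpace.single j (1 : ℝ))) :
    ∀ x y : EuclideanSpace ℝ (Fin N), ‖E x - E y‖ ≤ ‖x - y‖ :=
  stmt_3_general N i j hij s b hb_mono L hb_lip K hK hKL E hE
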